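/- arXiv:2208.03453 — 4 statements merged into one kernel-verified Lean document; each statement's English description precedes it below -/
import Mathlib

section
/- Let F : C ⥤ X be a reflector with fully faithful right adjoint U. For a pullback square in C with bottom-left corner the unit η_C : C → UF(C) and right leg a morphism U(g) between objects in the image of U, the functor UF preserves this pullback if and only if F preserves it. -/
/-!
`(F ⋙ U).map` is `U.map ∘ F.map`, and `U`, being a right adjoint, preserves pullbacks and,
being fully faithful, reflects them.
-/

open CategoryTheory CategoryTheory.Limits

theorem CategoryTheory.Functor.isPullback_map_iff_of_isRightAdjoint {C X : Type*}
    [Category* C] [Category* X] (U : X ⥤ C) [U.IsRightAdjoint] [U.Full] [U.Faithful]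
    {W Y Z T : X} {f : W ⟶ Y} {g : W ⟶ Z} {h : Y ⟶ T} {i : Z ⟶ T} :
    IsPullback (U.map f) (U.map g) (U.map h) (U.map i) ↔ IsPullback f g h i :=
  ⟨fun H => H.of_map_of_faithful U, fun H => H.map U⟩

theorem stmt3_general {C : Type u₁} {X : Type u₂} [Category.{v₁} C] [Category.{v₂} X]
    (F : C ⥤ X) (U : X ⥤ C) (adj : F ⊣ U) [U.Full] [U.Faithful]
    {P Co : C} {Xo : X} (p1 : P ⟶ Co) (p2 : P ⟶ U.obj Xo) (g : Xo ⟶ F.obj Co) :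
    IsPullback ((F ⋙ U).map p1) ((F ⋙ U).map p2) ((F ⋙ U).map (adj.unit.app Co))
        ((F ⋙ U).map (U.map g)) ↔
      IsPullback (F.map p1) (F.map p2) (F.map (adj.unit.app Co)) (F.map (U.map g)) :=
  have : U.IsRightAdjoint := adj.isRightAdjoint
  U.isPullback_map_iff_of_isRightAdjoint

/-- For a reflection `F ⊣ U` with `U` fully faithful, given a pullback square in `C`
whose bottom side is the unit `η_C : C ⟶ UF(C)` and whose right side is `U(g)` for a
morphism `g` of `X`, the endofunctor `L = F ⋙ U` preserves this pullback if and only if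
the reflector `F` preserves it. -/
theorem stmt3 {C : Type u₁} {X : Type u₂} [Category.{v₁} C] [Category.{v₂} X]
    (F : C ⥤ X) (U : X ⥤ C) (adj : F ⊣ U) [U.Full] [U.Faithful]
    {P Co : C} {Xo : X} (p1 : P ⟶ Co) (p2 : P ⟶ U.obj Xo) (g : Xo ⟶ F.obj Co)
    (hpb : IsPullback p1 p2 (adj.unit.app Co) (U.map g)) :
    IsPullback ((F ⋙ U).map p1) ((F ⋙ U).map p2) ((F ⋙ U).map (adj.unit.app Co))
        ((F ⋙ U).map (U.map g)) ↔
      IsPullback (F.map p1) (F.map p2) (F.map (adj.unit.app Co)) (F.map (U.map g)) :=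
  stmt3_general F U adj p1 p2 g
end

section
/- The abelianization functor on groups is not semi-left-exact: the pullback of the abelianization map D₈ → D₈^{ab} ≅ (ℤ/2) × (ℤ/2) along the inclusion of the trivial subgroup 0 → (ℤ/2) × (ℤ/2) is the center Z(D₈) ≅ ℤ/2, and the induced map ℤ/2 → 0 is not the abelianization map of ℤ/2 (i.e., abelianization does not preserve this pullback). -/
/-!
In `D₈ = DihedralGroup 4` the commutator subgroup and the center are both `{1, r 2}`, with
`r 2 = ⁅r 1, sr 0⁆`. The homomorphism recording the parity of the rotation index and whether an
element is a reflection is onto `(ℤ/2)²` with exactly this kernel, so it identifies `D₈^{ab}`.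
The center is abelian of order `2`, hence its own abelianization, which is therefore nontrivial.
-/

open scoped commutatorElement

namespace Abelianization

variable {G A : Type*} [Group G]

noncomputable def mulEquivOfSurjective [CommGroup A] (f : G →* A)
    (hf : Function.Surjective f) (hker : f.ker = commutator G) : Abelianization G ≃* A :=
  (QuotientGroup.quotientMulEquivOfEq hker.symm).trans
    (QuotientGroup.quotientKerEquivOfSurjective f hf)

open scoped IsMulCommutative in
theorem nontrivial_of_isMulCommutative [IsMulCommutative G] [Nontrivial G] :
    Nontrivial (Abelianization G) :=
  (equivOfComm (H := G)).symm.toEquiv.nontrivial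

end Abelianization

namespace DihedralGroup

theorem mem_center_four_iff (z : DihedralGroup 4) :
    z ∈ Subgroup.center (DihedralGroup 4) ↔ z = 1 ∨ z = r 2 := by
  rw [Subgroup.mem_center_iff]
  revert z
  decide

theorem center_four_eq_zpowers : Subgroup.center (DihedralGroup 4) = Subgroup.zpowers (r 2) := by
  refine le_antisymm (fun z hz => ?_)
    (Subgroup.zpowers_le.mpr ((mem_center_four_iff _).mpr (.inr rfl)))
  rcases (mem_center_four_iff z).mp hz with rfl | rfl
  · exact one_mem _
  · exact Subgroup.mem_zpowers _

theorem commutator_four_eq_center :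
    commutator (DihedralGroup 4) = Subgroup.center (DihedralGroup 4) := by
  refine le_antisymm ?_ ?_
  · rw [commutator_eq_closure, Subgroup.closure_le]
    rintro _ ⟨p, q, rfl⟩
    rw [SetLike.mem_coe, mem_center_four_iff]
    revert p q
    decide
  · have hr2 : (r 2 : DihedralGroup 4) = ⁅(r 1 : DihedralGroup 4), sr 0⁆ := by decide
    rw [center_four_eq_zpowers, Subgroup.zpowers_le, hr2]
    exact Subgroup.commutator_mem_commutator (Subgroup.mem_top _) (Subgroup.mem_top _)

theorem card_center_four : Nat.card (Subgroup.center (DihedralGroup 4)) = 2 := by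
  rw [center_four_eq_zpowers, Nat.card_zpowers, orderOf_r]
  rfl

def toZModTwoProd : DihedralGroup 4 →* Multiplicative (ZMod 2) × Multiplicative (ZMod 2) where
  toFun
    | r i => (.ofAdd (i.val : ZMod 2), .ofAdd 0)
    | sr i => (.ofAdd (i.val : ZMod 2), .ofAdd 1)
  map_one' := rfl
  map_mul' := by decide

theorem toZModTwoProd_surjective : Function.Surjective toZModTwoProd := by
  decide

theorem ker_toZModTwoProd : toZModTwoProd.ker = Subgroup.center (DihedralGroup 4) := by
  ext z
  rw [MonoidHom.mem_ker, mem_center_four_iff]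
  revert z
  decide

end DihedralGroup

/-- Abelianization of groups is not semi-left-exact: for the dihedral group `D₈` of
order `8`, the pullback of the abelianization map `D₈ → D₈^{ab} ≅ ℤ/2 × ℤ/2` along the
inclusion of the trivial subgroup is the kernel of the abelianization map, which equals
the center `Z(D₈) ≅ ℤ/2`; and abelianization does not preserve this pullback, since the
abelianization of this kernel is nontrivial (so the induced map `ℤ/2 → 0` is not the
abelianization map of `ℤ/2`). -/
theorem stmt7 :
    Nonempty (Abelianization (DihedralGroup 4) ≃*
      (Multiplicative (ZMod 2) × Multiplicative (ZMod 2))) ∧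
    MonoidHom.ker (Abelianization.of : DihedralGroup 4 →* Abelianization (DihedralGroup 4))
      = Subgroup.center (DihedralGroup 4) ∧
    Nonempty (Subgroup.center (DihedralGroup 4) ≃* Multiplicative (ZMod 2)) ∧
    ¬ Subsingleton (Abelianization (Subgroup.center (DihedralGroup 4))) := by
  have hker : DihedralGroup.toZModTwoProd.ker = commutator (DihedralGroup 4) :=
    DihedralGroup.ker_toZModTwoProd.trans DihedralGroup.commutator_four_eq_center.symm
  have hcenter : Nontrivial (Subgroup.center (DihedralGroup 4)) :=
    Finite.one_lt_card_iff_nontrivial.mp (by rw [DihedralGroup.card_center_four]; norm_num)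
  exact ⟨⟨Abelianization.mulEquivOfSurjective _ DihedralGroup.toZModTwoProd_surjective hker⟩,
    (Abelianization.ker_of _).trans DihedralGroup.commutator_four_eq_center,
    ⟨mulEquivOfPrimeCardEq DihedralGroup.card_center_four (by simp)⟩,
    not_subsingleton_iff_nontrivial.mpr Abelianization.nontrivial_of_isMulCommutative⟩
end

section
/- Let L be an idempotent pointed endofunctor (localization) on a category C with unit η. If e : E → E' is a morphism inverted by L, then η_{E} and η_{E'} ∘ e present the same localization: there is an isomorphism L(E) ≅ L(E') commuting with the coaugmentations. Consequently, a short exact sequence is L-flat if and only if its fiberwise replacement (connected to it by an L-equivalence over the same quotient with the same localized kernel) is L-flat. -/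
/-!
The isomorphism is `L e` itself, and it commutes with the coaugmentations by naturality of `η`.
For the second claim, apply `L` to the map of sequences `(η_K, e, 𝟙 Q)` from `K → E → Q` to
`L K → E' → Q`: its first two components become isomorphisms (idempotence of `L` and the
hypothesis on `e`), and being a kernel–cokernel pair is invariant under isomorphisms of
sequences.
-/

open CategoryTheory CategoryTheory.Limits

/-- A short exact sequence in a pointed category: `i` is the kernel of `p` and `p` is
the cokernel of `i`. -/
def IsSES {C : Type u} [Category.{v} C] [HasZeroMorphisms C]
    {K E Q : C} (i : K ⟶ E) (p : E ⟶ Q) : Prop :=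
  ∃ w : i ≫ p = 0,
    Nonempty (IsLimit (KernelFork.ofι i w)) ∧
      Nonempty (IsColimit (CokernelCofork.ofπ p w))

section IsSES

variable {C : Type u} [Category.{v} C] [HasZeroMorphisms C]
  {K E Q K' E' Q' : C} {i : K ⟶ E} {p : E ⟶ Q} {i' : K' ⟶ E'} {p' : E' ⟶ Q'}

theorem IsSES.of_iso (a : K ≅ K') (b : E ≅ E') (c : Q ≅ Q')
    (hi : i ≫ b.hom = a.hom ≫ i') (hp : p ≫ c.hom = b.hom ≫ p') (h : IsSES i p) :
    IsSES i' p' := by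
  obtain ⟨w, ⟨hK⟩, ⟨hQ⟩⟩ := h
  have w' : i' ≫ p' = 0 := by
    rw [← cancel_epi a.hom, ← Category.assoc, ← hi, Category.assoc, ← hp,
      reassoc_of% w, zero_comp, comp_zero]
  exact ⟨w',
    ⟨Fork.isLimitOfIsos _ hK (KernelFork.ofι i' w') b c a hp.symm (by simp) hi.symm⟩,
    ⟨Cofork.isColimitOfIsos _ hQ (CokernelCofork.ofπ p' w') a b c hi.symm (by simp)
      (by simp [hp])⟩⟩

theorem isSES_iff_of_iso (a : K ≅ K') (b : E ≅ E') (c : Q ≅ Q')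
    (hi : i ≫ b.hom = a.hom ≫ i') (hp : p ≫ c.hom = b.hom ≫ p') :
    IsSES i p ↔ IsSES i' p' :=
  ⟨IsSES.of_iso a b c hi hp,
    IsSES.of_iso a.symm b.symm c.symm (by simp [Iso.comp_inv_eq, hi])
      (by simp [Iso.comp_inv_eq, hp])⟩

end IsSES

theorem isSES_map_iff_of_isIso_map {C : Type u} [Category.{v} C] {D : Type*} [Category D]
    [HasZeroMorphisms D] (F : C ⥤ D) {K E Q K' E' : C} {i : K ⟶ E} {p : E ⟶ Q}
    {i' : K' ⟶ E'} {p' : E' ⟶ Q} (a : K ⟶ K') (e : E ⟶ E') [IsIso (F.map a)]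
    [IsIso (F.map e)] (hi : i ≫ e = a ≫ i') (hp : e ≫ p' = p) :
    IsSES (F.map i) (F.map p) ↔ IsSES (F.map i') (F.map p') :=
  isSES_iff_of_iso (asIso (F.map a)) (asIso (F.map e)) (Iso.refl _)
    (by simp only [asIso_hom, ← F.map_comp, hi])
    (by simp only [asIso_hom, Iso.refl_hom, Category.comp_id, ← F.map_comp, hp])

theorem stmt13_general {C : Type u} [Category.{v} C] [HasZeroMorphisms C]
    (L : C ⥤ C) (η : 𝟭 C ⟶ L)
    (hidem₁ : ∀ X : C, IsIso (L.map (η.app X)))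
    {E E' : C} (e : E ⟶ E') (he : IsIso (L.map e)) :
    (∃ φ : L.obj E ≅ L.obj E', η.app E ≫ φ.hom = e ≫ η.app E') ∧
    (∀ {K Q : C} (i : K ⟶ E) (p : E ⟶ Q) (i' : L.obj K ⟶ E') (p' : E' ⟶ Q),
      IsSES i p → IsSES i' p' →
      i ≫ e = η.app K ≫ i' → e ≫ p' = p →
      (IsSES (L.map i) (L.map p) ↔ IsSES (L.map i') (L.map p'))) := by
  refine ⟨⟨asIso (L.map e), (η.naturality e).symm⟩, ?_⟩
  intro K Q i p i' p' _ _ hi hp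
  exact isSES_map_iff_of_isIso_map L (η.app K) e hi hp

/-- Let `(L, η)` be an idempotent pointed endofunctor (localization).  If `e : E ⟶ E'`
is inverted by `L`, then `η_E` and `η_{E'} ∘ e` present the same localization: there is
an isomorphism `L(E) ≅ L(E')` commuting with the coaugmentations.  Consequently, a short
exact sequence `K → E → Q` is `L`-flat if and only if its fiberwise replacement
`L(K) → E' → Q` (connected to it by an `L`-equivalence `e` over the same quotient, with
the same localized kernel) is `L`-flat. -/
theorem stmt13 {C : Type u} [Category.{v} C] [HasZeroMorphisms C]
    (L : C ⥤ C) (η : 𝟭 C ⟶ L)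
    (hidem₁ : ∀ X : C, IsIso (L.map (η.app X)))
    (hidem₂ : ∀ X : C, L.map (η.app X) = η.app (L.obj X))
    {E E' : C} (e : E ⟶ E') (he : IsIso (L.map e)) :
    (∃ φ : L.obj E ≅ L.obj E', η.app E ≫ φ.hom = e ≫ η.app E') ∧
    (∀ {K Q : C} (i : K ⟶ E) (p : E ⟶ Q) (i' : L.obj K ⟶ E') (p' : E' ⟶ Q),
      IsSES i p → IsSES i' p' →
      i ≫ e = η.app K ≫ i' → e ≫ p' = p →
      (IsSES (L.map i) (L.map p) ↔ IsSES (L.map i') (L.map p'))) :=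
  stmt13_general L η hidem₁ e he
end

section
/- Let C be the category of groups and L = UF the composite of the abelianization reflector with the inclusion of abelian groups. Given a short exact sequence 0 → K → E → Q → 0 of groups such that 0 → K^{ab} → E^{ab} → Q^{ab} → 0 is exact (an L-flat sequence), and a pullback of this sequence along any group homomorphism X → Q, the resulting pulled-back sequence 0 → K → P → X → 0 is again L-flat, i.e., 0 → K^{ab} → P^{ab} → X^{ab} → 0 is exact. -/
/-!
Abelianization is right exact: a surjection `q : P →* X` with kernel `j.range` maps onto
`X^{ab}` with kernel the image of `K^{ab}`, because the commutator subgroup of `X` is the image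
of that of `P`. Applied to the pulled-back sequence `K → P → X`, this leaves only injectivity of
`K^{ab} → P^{ab}`, which follows since its composite with the projection `P^{ab} → E^{ab}` is the
injective map `K^{ab} → E^{ab}`.
-/

/-- The pullback `P = E ×_Q X = {(e, x) | p e = f x}` as a subgroup of `E × X`. -/
def pullbackSubgroup {E X Q : Type*} [Group E] [Group X] [Group Q]
    (p : E →* Q) (f : X →* Q) : Subgroup (E × X) where
  carrier := {ex | p ex.1 = f ex.2}
  mul_mem' := by
    intro a b ha hb
    simp only [Set.mem_setOf_eq, Prod.fst_mul, Prod.snd_mul, map_mul] at *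
    rw [ha, hb]
  one_mem' := by simp
  inv_mem' := by
    intro a ha
    simp only [Set.mem_setOf_eq, Prod.fst_inv, Prod.snd_inv, map_inv] at *
    rw [ha]

namespace Abelianization

variable {K G H : Type*} [Group K] [Group G] [Group H]

theorem map_surjective {f : G →* H} (hf : Function.Surjective f) :
    Function.Surjective (map f) := by
  have hcomp : ⇑(map f) ∘ ⇑of = ⇑of ∘ ⇑f := funext (map_of f)
  refine Function.Surjective.of_comp (g := ⇑of) ?_
  rw [hcomp]
  exact QuotientGroup.mk_surjective.comp hf

theorem range_map_eq_ker_map {j : K →* G} {q : G →* H} (hq : Function.Surjective q)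
    (hex : q.ker = j.range) : (map j).range = (map q).ker := by
  have hqj : q.comp j = 1 := MonoidHom.ext fun k => hex.ge ⟨k, rfl⟩
  apply le_antisymm
  · rintro _ ⟨a, rfl⟩
    rw [MonoidHom.mem_ker, map_map_apply, hqj]
    induction a using QuotientGroup.induction_on with
    | H k => exact (map_of 1 k).trans (map_one of)
  · intro b hb
    induction b using QuotientGroup.induction_on with
    | H w =>
      have hqw : q w ∈ commutator H := by
        rw [← ker_of, MonoidHom.mem_ker, ← map_of]
        exact hb
      have hw : w ∈ j.range ⊔ commutator G := by
        rwa [← hex, sup_comm, ← Subgroup.comap_map_eq, commutator_def,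
          Subgroup.map_commutator, Subgroup.map_top_of_surjective q hq, ← commutator_def]
      rw [← SetLike.mem_coe, Subgroup.mul_normal] at hw
      obtain ⟨_, ⟨k, rfl⟩, c, hc, rfl⟩ := hw
      refine ⟨of k, ?_⟩
      rw [← ker_of] at hc
      change map j (of k) = of (j k * c)
      rw [map_of, map_mul, MonoidHom.mem_ker.mp hc, mul_one]

end Abelianization

section Pullback

variable {K E Q X : Type*} [Group K] [Group E] [Group Q] [Group X]
  {i : K →* E} {p : E →* Q} {f : X →* Q}
  {j : K →* pullbackSubgroup p f} {q : pullbackSubgroup p f →* X}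

theorem surjective_of_pullback (hp : Function.Surjective p)
    (hq : ∀ x : pullbackSubgroup p f, q x = (x : E × X).2) : Function.Surjective q := by
  intro x
  obtain ⟨e, he⟩ := hp (f x)
  exact ⟨⟨(e, x), he⟩, hq _⟩

theorem ker_eq_range_of_pullback (hex : i.range = p.ker)
    (hj : ∀ k : K, (j k : E × X) = (i k, 1))
    (hq : ∀ x : pullbackSubgroup p f, q x = (x : E × X).2) : q.ker = j.range := by
  ext w
  constructor
  · intro hw
    have hw₂ : (w : E × X).2 = 1 := (hq w).symm.trans hw
    have hw₁ : (w : E × X).1 ∈ p.ker := by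
      rw [MonoidHom.mem_ker, w.2, hw₂, map_one]
    obtain ⟨k, hk⟩ := hex.ge hw₁
    exact ⟨k, Subtype.ext ((hj k).trans (Prod.ext hk hw₂.symm))⟩
  · rintro ⟨k, rfl⟩
    rw [MonoidHom.mem_ker, hq, hj]

theorem abelianization_map_injective_of_pullback
    (habi : Function.Injective (Abelianization.map i))
    (hj : ∀ k : K, (j k : E × X) = (i k, 1)) : Function.Injective (Abelianization.map j) := by
  let fst : pullbackSubgroup p f →* E :=
    (MonoidHom.fst E X).comp (pullbackSubgroup p f).subtype
  have hfst : fst.comp j = i := MonoidHom.ext fun k => congrArg Prod.fst (hj k)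
  rw [← hfst, ← Abelianization.map_comp, MonoidHom.coe_comp] at habi
  exact habi.of_comp

end Pullback

theorem stmt16_general {K E Q X : Type u} [Group K] [Group E] [Group Q] [Group X]
    (i : K →* E) (p : E →* Q) (f : X →* Q)
    (hp : Function.Surjective p) (hex : i.range = p.ker)
    (habi : Function.Injective (Abelianization.map i)) :
    ∀ (j : K →* pullbackSubgroup p f) (q : pullbackSubgroup p f →* X),
      (∀ k : K, (j k : E × X) = (i k, 1)) →
      (∀ x : pullbackSubgroup p f, q x = (x : E × X).2) →
      (Function.Injective (Abelianization.map j) ∧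
        Function.Surjective (Abelianization.map q) ∧
        (Abelianization.map j).range = (Abelianization.map q).ker) := by
  intro j q hj hq
  have hq_surj := surjective_of_pullback hp hq
  exact ⟨abelianization_map_injective_of_pullback habi hj,
    Abelianization.map_surjective hq_surj,
    Abelianization.range_map_eq_ker_map hq_surj (ker_eq_range_of_pullback hex hj hq)⟩

/-- Conditional flatness of abelianization in the category of groups: given a short
exact sequence `0 → K →ⁱ E →ᵖ Q → 0` whose image under abelianization
`0 → K^{ab} → E^{ab} → Q^{ab} → 0` is again exact (an `L`-flat sequence, for
`L = U ∘ ab`), and any homomorphism `f : X →* Q`, the pulled-back sequence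
`0 → K → P → X → 0` (with `P = E ×_Q X`) is again `L`-flat:
`0 → K^{ab} → P^{ab} → X^{ab} → 0` is exact. -/
theorem stmt16 {K E Q X : Type u} [Group K] [Group E] [Group Q] [Group X]
    (i : K →* E) (p : E →* Q) (f : X →* Q)
    (hi : Function.Injective i) (hp : Function.Surjective p) (hex : i.range = p.ker)
    (habi : Function.Injective (Abelianization.map i))
    (habp : Function.Surjective (Abelianization.map p))
    (habex : (Abelianization.map i).range = (Abelianization.map p).ker) :
    ∀ (j : K →* pullbackSubgroup p f) (q : pullbackSubgroup p f →* X),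
      (∀ k : K, (j k : E × X) = (i k, 1)) →
      (∀ x : pullbackSubgroup p f, q x = (x : E × X).2) →
      (Function.Injective (Abelianization.map j) ∧
        Function.Surjective (Abelianization.map q) ∧
        (Abelianization.map j).range = (Abelianization.map q).ker) :=
  stmt16_general i p f hp hex habi
end
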